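/- If F is an algebraically closed field of characteristic ≠ 2 and C is a composition algebra over F of dimension 4, then C is isomorphic as a unital F-algebra to the algebra Mat₂(F) of 2×2 matrices over F. -/

import Mathlib

/-- A composition algebra over a field `F`: a unital (not necessarily associative)
`F`-algebra endowed with a multiplicative quadratic form whose polar bilinear form
is nondegenerate. -/
structure CompositionAlgebra (F : Type*) [Field F] (C : Type*)
    [AddCommGroup C] [Module F C] where
  mul : C →ₗ[F] C →ₗ[F] C
  one : C
  one_mul : ∀ x : C, mul one x = x
  mul_one : ∀ x : C, mul x one = x
  n : QuadraticForm F C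
  norm_mul : ∀ x y : C, n (mul x y) = n x * n y
  nondeg : ∀ x : C, (∀ y : C, QuadraticMap.polar ⇑n x y = 0) → x = 0

/-- The polar form `b(x,y) = n(x+y) - n(x) - n(y)` of the norm. -/
def CompositionAlgebra.b {F : Type*} [Field F] {C : Type*} [AddCommGroup C] [Module F C]
    (A : CompositionAlgebra F C) (x y : C) : F :=
  QuadraticMap.polar ⇑A.n x y

/-- The trace `t(x) = b(x,1)`. -/
def CompositionAlgebra.t {F : Type*} [Field F] {C : Type*} [AddCommGroup C] [Module F C]
    (A : CompositionAlgebra F C) (x : C) : F :=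
  A.b x A.one

/-- The standard involution `x̄ = t(x)·1 − x`. -/
def CompositionAlgebra.conj {F : Type*} [Field F] {C : Type*} [AddCommGroup C] [Module F C]
    (A : CompositionAlgebra F C) (x : C) : C :=
  A.t x • A.one - x

namespace CompositionAlgebra

variable {F : Type*} [Field F] {C : Type*} [AddCommGroup C] [Module F C]
  (A : CompositionAlgebra F C)

lemma b_comm (x y : C) : A.b x y = A.b y x := QuadraticMap.polar_comm _ x y

lemma b_add_left (x x' y : C) : A.b (x + x') y = A.b x y + A.b x' y :=
  QuadraticMap.polar_add_left A.n x x' y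

lemma b_sub_left (x x' y : C) : A.b (x - x') y = A.b x y - A.b x' y :=
  QuadraticMap.polar_sub_left A.n x x' y

lemma b_smul_left (a : F) (x y : C) : A.b (a • x) y = a * A.b x y := by
  rw [b, QuadraticMap.polar_smul_left, smul_eq_mul]; rfl

lemma b_add_right (x y y' : C) : A.b x (y + y') = A.b x y + A.b x y' :=
  QuadraticMap.polar_add_right A.n x y y'

lemma b_smul_right (a : F) (x y : C) : A.b x (a • y) = a * A.b x y := by
  rw [b, QuadraticMap.polar_smul_right, smul_eq_mul]; rfl

lemma b_sub_right (x y y' : C) : A.b x (y - y') = A.b x y - A.b x y' :=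
  QuadraticMap.polar_sub_right A.n x y y'

lemma b_self (x : C) : A.b x x = 2 * A.n x := by
  have := QuadraticMap.polar_self A.n x
  rw [b]; rw [this]; rw [two_smul]; ring

lemma n_expand (x y : C) : A.n (x + y) = A.n x + A.n y + A.b x y := by
  rw [b, QuadraticMap.polar]; ring

lemma comp1 (x y z : C) : A.b (A.mul x y) (A.mul x z) = A.n x * A.b y z := by
  have h1 : A.mul x (y + z) = A.mul x y + A.mul x z := map_add _ _ _
  rw [b, b, QuadraticMap.polar, QuadraticMap.polar, ← h1,
    A.norm_mul, A.norm_mul, A.norm_mul]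
  ring

lemma comp2 (x y z : C) : A.b (A.mul x y) (A.mul z y) = A.b x z * A.n y := by
  have h1 : A.mul (x + z) y = A.mul x y + A.mul z y := by
    rw [map_add, LinearMap.add_apply]
  rw [b, b, QuadraticMap.polar, QuadraticMap.polar, ← h1,
    A.norm_mul, A.norm_mul, A.norm_mul]
  ring

lemma lin1 (x y w z : C) :
    A.b (A.mul x y) (A.mul w z) + A.b (A.mul w y) (A.mul x z) = A.b x w * A.b y z := by
  have h := A.comp1 (x + w) y z
  have e1 : A.mul (x + w) y = A.mul x y + A.mul w y := by rw [map_add, LinearMap.add_apply]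
  have e2 : A.mul (x + w) z = A.mul x z + A.mul w z := by rw [map_add, LinearMap.add_apply]
  rw [e1, e2, b_add_left, b_add_right, b_add_right, A.n_expand x w] at h
  rw [A.comp1 x y z, A.comp1 w y z] at h
  linear_combination h

lemma lin2 (x y w z : C) :
    A.b (A.mul x y) (A.mul z w) + A.b (A.mul x w) (A.mul z y) = A.b x z * A.b y w := by
  have h := A.comp2 x (y + w) z
  have e1 : A.mul x (y + w) = A.mul x y + A.mul x w := map_add _ _ _
  have e2 : A.mul z (y + w) = A.mul z y + A.mul z w := map_add _ _ _
  rw [e1, e2, b_add_left, b_add_right, b_add_right, A.n_expand y w] at h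
  rw [A.comp2 x y z, A.comp2 x w z] at h
  linear_combination h

lemma eq_of_b (u v : C) (h : ∀ z : C, A.b u z = A.b v z) : u = v := by
  have h0 : u - v = 0 := A.nondeg (u - v) fun z => by
    have := A.b_sub_left u v z
    rw [h z] at this
    simpa [b] using this
  exact sub_eq_zero.mp h0

lemma sq (x : C) : A.mul x x = A.t x • x - A.n x • A.one := by
  apply A.eq_of_b; intro z
  have h := A.lin1 x x A.one z
  rw [A.one_mul, A.one_mul] at h
  have h2 : A.b x (A.mul x z) = A.n x * A.b A.one z := by
    have := A.comp1 x A.one z; rwa [A.mul_one] at this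
  rw [h2] at h
  rw [b_sub_left, b_smul_left, b_smul_left]
  rw [t]
  linear_combination h

lemma anticomm (x y : C) :
    A.mul x y + A.mul y x = A.t x • y + A.t y • x - A.b x y • A.one := by
  have h := A.sq (x + y)
  have e1 : A.mul (x + y) (x + y)
      = A.mul x x + A.mul x y + (A.mul y x + A.mul y y) := by
    simp only [map_add, LinearMap.add_apply]
    abel
  have e2 : A.t (x + y) = A.t x + A.t y := A.b_add_left x y A.one
  rw [e1, e2, A.n_expand x y, A.sq x, A.sq y] at h
  linear_combination (norm := module) h

lemma trace_mul (x y : C) : A.t (A.mul x y) = A.t x * A.t y - A.b x y := by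
  have h := A.lin1 x y A.one A.one
  rw [A.one_mul, A.one_mul, A.mul_one] at h
  rw [t, t, t]
  rw [A.b_comm y x] at h
  linear_combination h

lemma leftmul (x y : C) :
    A.mul x (A.mul x y) = A.t x • A.mul x y - A.n x • y := by
  apply A.eq_of_b; intro z
  have h := A.lin1 x (A.mul x y) A.one z
  rw [A.one_mul, A.one_mul] at h
  rw [A.comp1 x y z] at h
  rw [b_sub_left, b_smul_left, b_smul_left, t]
  linear_combination h

lemma rightmul (x y : C) :
    A.mul (A.mul y x) x = A.t x • A.mul y x - A.n x • y := by
  apply A.eq_of_b; intro z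
  have h := A.lin2 (A.mul y x) x A.one z
  rw [A.mul_one, A.mul_one] at h
  rw [A.comp2 y x z] at h
  rw [b_sub_left, b_smul_left, b_smul_left, t]
  linear_combination h


lemma exists_n_ne_zero (hdim : Module.finrank F C = 4) : ∃ x : C, A.n x ≠ 0 := by
  by_contra h
  push_neg at h
  have hz : ∀ u : C, u = 0 := fun u => A.nondeg u fun y => by
    simp [QuadraticMap.polar, h]
  have : Subsingleton C := ⟨fun a b => (hz a).trans (hz b).symm⟩
  rw [Module.finrank_zero_of_subsingleton] at hdim
  exact absurd hdim (by norm_num)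

lemma n_one (hdim : Module.finrank F C = 4) : A.n A.one = 1 := by
  obtain ⟨x, hx⟩ := A.exists_n_ne_zero hdim
  have := A.norm_mul A.one x
  rw [A.one_mul] at this
  field_simp at this
  exact this.symm

lemma t_one (hdim : Module.finrank F C = 4) : A.t A.one = 2 := by
  rw [t, A.b_self, A.n_one hdim]; ring

lemma exists_i [IsAlgClosed F] (h2 : (2 : F) ≠ 0) (hdim : Module.finrank F C = 4) :
    ∃ i : C, A.t i = 0 ∧ A.n i = -1 := by
  have hstep : ∃ x : C, A.t x = 0 ∧ A.n x ≠ 0 := by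
    by_contra h
    push_neg at h
    have key : ∀ z : C, z = (A.t z / 2) • A.one := by
      intro z
      set w := z - (A.t z / 2) • A.one with hw
      have htw : A.t w = 0 := by
        rw [t, hw, A.b_sub_left, A.b_smul_left, A.b_self, A.n_one hdim]
        field_simp [t]
        simp [t]
      have hbw : ∀ u : C, A.b w u = 0 := by
        intro u
        set u0 := u - (A.t u / 2) • A.one with hu0
        have htu0 : A.t u0 = 0 := by
          rw [t, hu0, A.b_sub_left, A.b_smul_left, A.b_self, A.n_one hdim]
          field_simp [t]
          simp [t]
        have hsum : A.t (w + u0) = 0 := by rw [t, A.b_add_left, ← t, ← t, htw, htu0, add_zero]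
        have hb0 : A.b w u0 = 0 := by
          have := A.n_expand w u0
          rw [h _ hsum, h _ htw, h _ htu0] at this
          simpa using this.symm
        have hdecomp : u = (A.t u / 2) • A.one + u0 := by rw [hu0]; abel
        rw [hdecomp, A.b_add_right, A.b_smul_right, hb0, add_zero,
          show A.b w A.one = 0 from htw, mul_zero]
      have : w = 0 := A.nondeg w fun y => hbw y
      rw [hw] at this
      have := sub_eq_zero.mp this
      exact this
    have hsurj : Function.Surjective (LinearMap.toSpanSingleton F C A.one) := by
      intro z
      exact ⟨A.t z / 2, (key z).symm⟩
    have hle := (LinearMap.toSpanSingleton F C A.one).finrank_range_le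
    rw [LinearMap.range_eq_top.mpr hsurj, finrank_top, Module.finrank_self] at hle
    omega
  obtain ⟨x, htx, hnx⟩ := hstep
  obtain ⟨s, hs⟩ := IsAlgClosed.exists_pow_nat_eq (-(A.n x)⁻¹) (n := 2) (by norm_num)
  refine ⟨s • x, ?_, ?_⟩
  · rw [t, A.b_smul_left, ← t, htx, mul_zero]
  · rw [QuadraticMap.map_smul, smul_eq_mul, ← pow_two, hs]
    field_simp


lemma exists_j [IsAlgClosed F] (h2 : (2 : F) ≠ 0) (hdim : Module.finrank F C = 4)
    (i : C) (hti : A.t i = 0) (hni : A.n i = -1) :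
    ∃ j : C, A.t j = 0 ∧ A.b i j = 0 ∧ A.n j = -1 := by
  have hbii : A.b i i = -2 := by rw [A.b_self, hni]; ring
  have hbi1 : A.b i A.one = 0 := hti
  have hb1i : A.b A.one i = 0 := by rw [A.b_comm]; exact hti
  have hstep : ∃ x : C, A.t x = 0 ∧ A.b i x = 0 ∧ A.n x ≠ 0 := by
    by_contra h
    push_neg at h
    -- key decomposition: every z lies in span {one, i}
    have key : ∀ z : C, z = (A.t z / 2) • A.one - (A.b i z / 2) • i := by
      intro z
      set w := z - (A.t z / 2) • A.one + (A.b i z / 2) • i with hw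
      have htw : A.t w = 0 := by
        rw [t, hw, A.b_add_left, A.b_sub_left, A.b_smul_left, A.b_smul_left, A.b_self,
          A.n_one hdim, ← t, ← t, hti]
        field_simp
        ring
      have hbiw : A.b i w = 0 := by
        rw [hw, A.b_add_right, A.b_comm i (z - _), A.b_sub_left, A.b_smul_left,
          A.b_smul_right, hbii, A.b_comm z i, A.b_comm A.one i, hbi1]
        field_simp
        ring
      have hbw : ∀ u : C, A.b w u = 0 := by
        intro u
        set u0 := u - (A.t u / 2) • A.one + (A.b i u / 2) • i with hu0
        have htu0 : A.t u0 = 0 := by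
          rw [t, hu0, A.b_add_left, A.b_sub_left, A.b_smul_left, A.b_smul_left, A.b_self,
            A.n_one hdim, ← t, ← t, hti]
          field_simp
          ring
        have hbiu0 : A.b i u0 = 0 := by
          rw [hu0, A.b_add_right, A.b_comm i (u - _), A.b_sub_left, A.b_smul_left,
            A.b_smul_right, hbii, A.b_comm u i, A.b_comm A.one i, hbi1]
          field_simp
          ring
        have hb0 : A.b w u0 = 0 := by
          have hsumt : A.t (w + u0) = 0 := by
            rw [t, A.b_add_left, ← t, ← t, htw, htu0, add_zero]
          have hsumb : A.b i (w + u0) = 0 := by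
            rw [A.b_add_right, hbiw, hbiu0, add_zero]
          have := A.n_expand w u0
          rw [h _ hsumt hsumb, h _ htw hbiw, h _ htu0 hbiu0] at this
          simpa using this.symm
        have hdecomp : u = (A.t u / 2) • A.one - (A.b i u / 2) • i + u0 := by
          rw [hu0]; abel
        rw [hdecomp, A.b_add_right, A.b_sub_right, A.b_smul_right, A.b_smul_right, hb0,
          show A.b w A.one = 0 from htw, show A.b w i = 0 from (A.b_comm w i).trans hbiw,
          add_zero, mul_zero, mul_zero, sub_zero]
      have hw0 : w = 0 := A.nondeg w fun y => hbw y
      rw [hw] at hw0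
      linear_combination (norm := module) hw0
    have hsurj : Function.Surjective
        ((LinearMap.toSpanSingleton F C A.one).coprod (LinearMap.toSpanSingleton F C i)) := by
      intro z
      refine ⟨(A.t z / 2, -(A.b i z / 2)), ?_⟩
      simp only [LinearMap.coprod_apply, LinearMap.toSpanSingleton_apply]
      rw [neg_smul, ← sub_eq_add_neg]
      exact (key z).symm
    have hle := ((LinearMap.toSpanSingleton F C A.one).coprod
      (LinearMap.toSpanSingleton F C i)).finrank_range_le
    rw [LinearMap.range_eq_top.mpr hsurj, finrank_top, Module.finrank_prod,
      Module.finrank_self] at hle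
    omega
  obtain ⟨x, htx, hbix, hnx⟩ := hstep
  obtain ⟨s, hs⟩ := IsAlgClosed.exists_pow_nat_eq (-(A.n x)⁻¹) (n := 2) (by norm_num)
  refine ⟨s • x, ?_, ?_, ?_⟩
  · rw [t, A.b_smul_left, ← t, htx, mul_zero]
  · rw [A.b_smul_right, hbix, mul_zero]
  · rw [QuadraticMap.map_smul, smul_eq_mul, ← pow_two, hs]
    field_simp

end CompositionAlgebra

/-- Over an algebraically closed field of characteristic `≠ 2`, a four-dimensional
composition algebra is isomorphic, as a unital algebra, to `Mat₂(F)`. -/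
theorem dim_four_composition_algebra_iso {F : Type*} [Field F] [IsAlgClosed F] {C : Type*}
    [AddCommGroup C] [Module F C] [FiniteDimensional F C]
    (hF : ringChar F ≠ 2) (A : CompositionAlgebra F C)
    (hdim : Module.finrank F C = 4) :
    ∃ e : C ≃ₗ[F] Matrix (Fin 2) (Fin 2) F,
      (∀ x y : C, e (A.mul x y) = e x * e y) ∧ e A.one = 1 := by
  have h2 : (2 : F) ≠ 0 := Ring.two_ne_zero hF
  obtain ⟨i, hti, hni⟩ := A.exists_i h2 hdim
  obtain ⟨j, htj, hbij, hnj⟩ := A.exists_j h2 hdim i hti hni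
  set k := A.mul i j with hk
  have hkneg : k = -(A.mul j i) := by
    have h := A.anticomm i j
    rw [hti, htj, hbij] at h
    simp only [zero_smul, add_zero, sub_zero, zero_add] at h
    rw [hk]
    exact eq_neg_of_add_eq_zero_left h
  -- scalar facts
  have hnk : A.n k = 1 := by rw [hk, A.norm_mul, hni, hnj]; ring
  have htk : A.t k = 0 := by rw [hk, A.trace_mul, hti, htj, hbij]; ring
  have hb1i : A.b A.one i = 0 := (A.b_comm _ _).trans hti
  have hb1j : A.b A.one j = 0 := (A.b_comm _ _).trans htj
  have hb1k : A.b A.one k = 0 := (A.b_comm _ _).trans htk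
  have hbik : A.b i k = 0 := by
    have h := A.comp1 i A.one j
    rw [A.mul_one] at h
    rw [hk, h, hb1j, mul_zero]
  have hbjk : A.b j k = 0 := by
    have h := A.comp2 A.one j i
    rw [A.one_mul] at h
    rw [hk, h, hb1i, zero_mul]
  have hb11 : A.b A.one A.one = 2 := by rw [A.b_self, A.n_one hdim]; ring
  have hbii : A.b i i = -2 := by rw [A.b_self, hni]; ring
  have hbjj : A.b j j = -2 := by rw [A.b_self, hnj]; ring
  have hbkk : A.b k k = 2 := by rw [A.b_self, hnk]; ring
  -- products
  have p_ii : A.mul i i = A.one := by rw [A.sq, hti, hni]; simp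
  have p_jj : A.mul j j = A.one := by rw [A.sq, htj, hnj]; simp
  have p_kk : A.mul k k = -A.one := by rw [A.sq, htk, hnk]; simp
  have p_ji : A.mul j i = -k := by rw [hkneg, neg_neg]
  have p_ik : A.mul i k = j := by
    have h := A.leftmul i j
    rw [hti, hni] at h
    rw [hk, h]; simp
  have p_kj : A.mul k j = i := by
    have h := A.rightmul j i
    rw [htj, hnj] at h
    rw [hk, h]; simp
  have p_ki : A.mul k i = -j := by
    have h := A.rightmul i j
    rw [hti, hni] at h
    calc A.mul k i = -(A.mul (A.mul j i) i) := by
          rw [hkneg, map_neg, LinearMap.neg_apply]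
      _ = -j := by rw [h]; simp
  have p_jk : A.mul j k = -i := by
    have h := A.leftmul j i
    rw [htj, hnj] at h
    calc A.mul j k = -(A.mul j (A.mul j i)) := by rw [hkneg, map_neg]
      _ = -i := by rw [h]; simp
  -- linear independence in C
  have hb0 : ∀ z : C, A.b 0 z = 0 := fun z => by
    rw [show (0 : C) = (0 : F) • (0 : C) from (zero_smul F _).symm, A.b_smul_left, zero_mul]
  have li : LinearIndependent F ![A.one, i, j, k] := by
    rw [Fintype.linearIndependent_iff]
    intro g hg
    rw [Fin.sum_univ_four] at hg
    simp only [Matrix.cons_val_zero, Matrix.cons_val_one, Matrix.head_cons,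
      Matrix.cons_val_two, Matrix.cons_val_three, Matrix.tail_cons] at hg
    have key : ∀ y : C, g 0 * A.b A.one y + g 1 * A.b i y + g 2 * A.b j y
        + g 3 * A.b k y = 0 := by
      intro y
      have hcast := congrArg (fun u => A.b u y) hg
      simp only [A.b_add_left, A.b_smul_left, hb0] at hcast
      linear_combination hcast
    have e0 := key A.one
    rw [hb11, show A.b i A.one = 0 from hti, show A.b j A.one = 0 from htj,
      show A.b k A.one = 0 from htk] at e0
    have e1 := key i
    rw [hb1i, hbii, show A.b j i = 0 from (A.b_comm j i).trans hbij,
      show A.b k i = 0 from (A.b_comm k i).trans hbik] at e1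
    have e2 := key j
    rw [hb1j, hbjj, hbij, show A.b k j = 0 from (A.b_comm k j).trans hbjk] at e2
    have e3 := key k
    rw [hb1k, hbik, hbjk, hbkk] at e3
    have hg0 : g 0 = 0 := by
      have h : 2 * g 0 = 0 := by linear_combination e0
      exact (mul_eq_zero.mp h).resolve_left h2
    have hg1 : g 1 = 0 := by
      have h : (-2) * g 1 = 0 := by linear_combination e1
      rcases mul_eq_zero.mp h with h' | h'
      · exact absurd (by linear_combination -h' : (2:F) = 0) h2
      · exact h'
    have hg2 : g 2 = 0 := by
      have h : (-2) * g 2 = 0 := by linear_combination e2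
      rcases mul_eq_zero.mp h with h' | h'
      · exact absurd (by linear_combination -h' : (2:F) = 0) h2
      · exact h'
    have hg3 : g 3 = 0 := by
      have h : 2 * g 3 = 0 := by linear_combination e3
      exact (mul_eq_zero.mp h).resolve_left h2
    intro l
    fin_cases l <;> assumption
  let bC : Module.Basis (Fin 4) F C :=
    basisOfLinearIndependentOfCardEqFinrank li (by rw [hdim]; rfl)
  have hbC : ⇑bC = ![A.one, i, j, k] :=
    coe_basisOfLinearIndependentOfCardEqFinrank li _
  -- linear independence in matrices
  have liM : LinearIndependent F
      ![(1 : Matrix (Fin 2) (Fin 2) F), !![1,0;0,-1], !![0,1;1,0], !![0,1;-1,0]] := by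
    rw [Fintype.linearIndependent_iff]
    intro g hg
    rw [Fin.sum_univ_four] at hg
    simp only [Matrix.cons_val_zero, Matrix.cons_val_one, Matrix.head_cons,
      Matrix.cons_val_two, Matrix.cons_val_three, Matrix.tail_cons] at hg
    have h00 := congrFun (congrFun hg 0) 0
    have h01 := congrFun (congrFun hg 0) 1
    have h10 := congrFun (congrFun hg 1) 0
    have h11 := congrFun (congrFun hg 1) 1
    simp [Matrix.add_apply, Matrix.smul_apply, Matrix.one_apply, smul_eq_mul]
      at h00 h01 h10 h11
    have hg0 : g 0 = 0 := by
      have h : 2 * g 0 = 0 := by linear_combination h00 + h11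
      exact (mul_eq_zero.mp h).resolve_left h2
    have hg1 : g 1 = 0 := by
      have h : 2 * g 1 = 0 := by linear_combination h00 - h11
      exact (mul_eq_zero.mp h).resolve_left h2
    have hg2 : g 2 = 0 := by
      have h : 2 * g 2 = 0 := by linear_combination h01 + h10
      exact (mul_eq_zero.mp h).resolve_left h2
    have hg3 : g 3 = 0 := by
      have h : 2 * g 3 = 0 := by linear_combination h01 - h10
      exact (mul_eq_zero.mp h).resolve_left h2
    intro l
    fin_cases l <;> assumption
  let bM : Module.Basis (Fin 4) F (Matrix (Fin 2) (Fin 2) F) :=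
    basisOfLinearIndependentOfCardEqFinrank liM
      (by rw [Module.finrank_matrix]; simp)
  have hbM : ⇑bM = ![(1 : Matrix (Fin 2) (Fin 2) F), !![1,0;0,-1], !![0,1;1,0], !![0,1;-1,0]] :=
    coe_basisOfLinearIndependentOfCardEqFinrank liM _
  let e : C ≃ₗ[F] Matrix (Fin 2) (Fin 2) F := bC.equiv bM (Equiv.refl _)
  have he : ∀ l : Fin 4, e (![A.one, i, j, k] l)
      = ![(1 : Matrix (Fin 2) (Fin 2) F), !![1,0;0,-1], !![0,1;1,0], !![0,1;-1,0]] l := by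
    intro l
    have h := bC.equiv_apply l bM (Equiv.refl _)
    rw [hbC, hbM] at h
    simpa using h
  have he0 : e A.one = 1 := by simpa using he 0
  have hei : e i = !![1,0;0,-1] := by
    have := he 1
    simpa using this
  have hej : e j = !![0,1;1,0] := by
    have := he 2
    simpa [Matrix.cons_val_two, Matrix.tail_cons] using this
  have hek : e k = !![0,1;-1,0] := by
    have := he 3
    simpa [Matrix.cons_val_three, Matrix.tail_cons] using this
  have main : A.mul.compr₂ (e : C →ₗ[F] Matrix (Fin 2) (Fin 2) F)
      = (LinearMap.mul F (Matrix (Fin 2) (Fin 2) F)).compl₁₂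
          (e : C →ₗ[F] Matrix (Fin 2) (Fin 2) F) (e : C →ₗ[F] Matrix (Fin 2) (Fin 2) F) := by
    apply bC.ext; intro l
    apply bC.ext; intro m
    simp only [LinearMap.compr₂_apply, LinearMap.compl₁₂_apply, LinearMap.mul_apply',
      LinearEquiv.coe_coe, hbC]
    fin_cases l <;> fin_cases m <;>
      norm_num [Matrix.cons_val_zero, Matrix.cons_val_one, Matrix.head_cons,
        Matrix.cons_val_two, Matrix.cons_val_three, Matrix.tail_cons,
        A.one_mul, A.mul_one, p_ii, p_jj, p_kk, p_ji, p_ik, p_kj, p_ki, p_jk,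
        he0, hei, hej, hek, ← hk, map_neg, Matrix.mul_fin_two, Matrix.one_fin_two] <;>
      simp [← Matrix.ext_iff, Fin.forall_fin_two, Matrix.one_apply, Matrix.neg_apply]
  refine ⟨e, fun x y => ?_, he0⟩
  have h := LinearMap.congr_fun (LinearMap.congr_fun main x) y
  simpa [LinearMap.compr₂_apply, LinearMap.compl₁₂_apply, LinearMap.mul_apply'] using h
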